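/- If a Markushevich basis B has Property (F*) with constant 𝓕*, then B is almost-greedy with constant C_al ≤ (𝓕*)². -/

import Mathlib

open Finset

noncomputable def msgn (t : ℝ) : ℝ := if t < 0 then -1 else 1
lemma abs_msgn (t : ℝ) : |msgn t| = 1 := by
  unfold msgn; split <;> simp
lemma msgn_mul_abs (t : ℝ) : msgn t * |t| = t := by
  unfold msgn; split
  · rw [abs_of_neg (by assumption)]; ring
  · rw [abs_of_nonneg (by linarith [not_lt.mp (by assumption)])]; ring
lemma abs_add_msgn (t δ : ℝ) (hδ : 0 ≤ δ) : |t + δ * msgn t| = |t| + δ := by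
  unfold msgn; split
  · rename_i h
    rw [abs_of_neg h, abs_of_neg (by nlinarith)]; ring
  · rename_i h
    rw [not_lt] at h
    rw [abs_of_nonneg h, abs_of_nonneg (by nlinarith)]; ring


/-- A semi-normalized Markushevich basis of a real Banach space `X`. -/
structure MBasis (X : Type*) [NormedAddCommGroup X] [NormedSpace ℝ X] where
  e : ℕ → X
  coord : ℕ → X →L[ℝ] ℝ
  biorth : ∀ n m, coord n (e m) = if n = m then 1 else 0
  dense_span : (Submodule.span ℝ (Set.range e)).topologicalClosure = ⊤
  total : ∀ f : X, (∀ n, coord n f = 0) → f = 0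
  semiNormalized : ∃ c₁ c₂ : ℝ, 0 < c₁ ∧
    ∀ n, c₁ ≤ ‖e n‖ ∧ c₁ ≤ ‖coord n‖ ∧ ‖e n‖ ≤ c₂ ∧ ‖coord n‖ ≤ c₂

namespace MBasis

variable {X : Type*} [NormedAddCommGroup X] [NormedSpace ℝ X] (B : MBasis X)

/-- The support of a vector. -/
def supp (f : X) : Set ℕ := {n | B.coord n f ≠ 0}

/-- Finitely supported vectors. -/
def FinSupp (f : X) : Prop := (B.supp f).Finite

/-- Coordinate projection onto a finite set. -/
noncomputable def P (A : Finset ℕ) (f : X) : X := ∑ n ∈ A, B.coord n f • B.e n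

/-- Indicator sum `1_A`. -/
noncomputable def ind (A : Finset ℕ) : X := ∑ n ∈ A, B.e n

/-- Partial sum of order `k`. -/
noncomputable def S (k : ℕ) (f : X) : X := B.P (Finset.range k) f

/-- `A` is a greedy set for `f`. -/
def Greedy (f : X) (A : Finset ℕ) : Prop :=
  ∀ n ∈ A, ∀ m ∉ A, |B.coord m f| ≤ |B.coord n f|

/-- Quasi-greedy with constant `C`. -/
def QuasiGreedy (C : ℝ) : Prop :=
  ∀ f : X, ∀ A : Finset ℕ, B.Greedy f A → ‖f - B.P A f‖ ≤ C * ‖f‖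

/-- Democratic with constant `C`. -/
def Democratic (C : ℝ) : Prop :=
  ∀ A B' : Finset ℕ, A.card ≤ B'.card → ‖B.ind A‖ ≤ C * ‖B.ind B'‖

/-- Conservative with constant `C`. -/
def Conservative (C : ℝ) : Prop :=
  ∀ A B' : Finset ℕ, A.card ≤ B'.card → (∀ i ∈ A, ∀ j ∈ B', i < j) →
    ‖B.ind A‖ ≤ C * ‖B.ind B'‖

/-- Symmetric for largest coefficients with constant `C`. -/
def SLC (C : ℝ) : Prop :=
  ∀ (f : X) (A B' : Finset ℕ) (ε η : ℕ → ℝ),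
    A.card ≤ B'.card → Disjoint A B' →
    Disjoint (B.supp f) ((A ∪ B' : Finset ℕ) : Set ℕ) →
    (∀ n, |B.coord n f| ≤ 1) →
    (∀ n ∈ A, |ε n| = 1) → (∀ n ∈ B', |η n| = 1) →
    ‖f + ∑ n ∈ A, ε n • B.e n‖ ≤ C * ‖f + ∑ n ∈ B', η n • B.e n‖

/-- Almost-greedy with constant `C`. -/
def AlmostGreedy (C : ℝ) : Prop :=
  ∀ f : X, ∀ A : Finset ℕ, B.Greedy f A →
    ∀ B' : Finset ℕ, B'.card ≤ A.card → ‖f - B.P A f‖ ≤ C * ‖f - B.P B' f‖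

/-- Partially-greedy with constant `C`. -/
def PartiallyGreedy (C : ℝ) : Prop :=
  ∀ f : X, ∀ A : Finset ℕ, B.Greedy f A →
    ∀ k ≤ A.card, ‖f - B.P A f‖ ≤ C * ‖f - B.S k f‖

/-- Property (F) with constant `C`. -/
def PropF (C : ℝ) : Prop :=
  ∀ (f g : X) (A B' : Finset ℕ),
    B.FinSupp f → B.FinSupp g → Disjoint (B.supp f) (B.supp g) →
    A.card ≤ B'.card → Disjoint A B' →
    Disjoint (B.supp (f + g)) ((A ∪ B' : Finset ℕ) : Set ℕ) →
    (∀ n, |B.coord n f| ≤ 1) →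
    (∀ m n, B.coord n g ≠ 0 → |B.coord m f| ≤ |B.coord n g|) →
    ‖f + B.ind A‖ ≤ C * ‖f + g + B.ind B'‖

/-- Property (F_p) with constant `C` (extra condition `A < supp(g) ∪ B`). -/
def PropFp (C : ℝ) : Prop :=
  ∀ (f g : X) (A B' : Finset ℕ),
    B.FinSupp f → B.FinSupp g → Disjoint (B.supp f) (B.supp g) →
    A.card ≤ B'.card → Disjoint A B' →
    Disjoint (B.supp (f + g)) ((A ∪ B' : Finset ℕ) : Set ℕ) →
    (∀ n, |B.coord n f| ≤ 1) →
    (∀ m n, B.coord n g ≠ 0 → |B.coord m f| ≤ |B.coord n g|) →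
    (∀ i ∈ A, (∀ j ∈ B.supp g, i < j) ∧ (∀ j ∈ B', i < j)) →
    ‖f + B.ind A‖ ≤ C * ‖f + g + B.ind B'‖

/-- The set of coordinates of `y` with coefficient of modulus one. -/
def unitSet (y : X) : Set ℕ := {n | B.coord n y ≠ 0 ∧ |B.coord n y| = 1}

/-- Property (F*) with constant `C`. -/
def PropFStar (C : ℝ) : Prop :=
  ∀ f z y : X,
    B.FinSupp f → B.FinSupp z → B.FinSupp y →
    Disjoint (B.supp f) (B.supp z) → Disjoint (B.supp f) (B.supp y) →
    Disjoint (B.supp z) (B.supp y) →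
    (∀ n, |B.coord n f| ≤ 1) → (∀ n, |B.coord n z| ≤ 1) →
    (B.supp z).ncard ≤ (B.unitSet y).ncard →
    (∀ m n, B.coord n y ≠ 0 → |B.coord m f| ≤ |B.coord n y|) →
    ‖f + z‖ ≤ C * ‖f + y‖

/-- Property (F*_p) with constant `C` (extra condition `supp z < supp (f + y)`). -/
def PropFStarP (C : ℝ) : Prop :=
  ∀ f z y : X,
    B.FinSupp f → B.FinSupp z → B.FinSupp y →
    Disjoint (B.supp f) (B.supp z) → Disjoint (B.supp f) (B.supp y) →
    Disjoint (B.supp z) (B.supp y) →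
    (∀ n, |B.coord n f| ≤ 1) → (∀ n, |B.coord n z| ≤ 1) →
    (B.supp z).ncard ≤ (B.unitSet y).ncard →
    (∀ m n, B.coord n y ≠ 0 → |B.coord m f| ≤ |B.coord n y|) →
    (∀ i ∈ B.supp z, ∀ j ∈ B.supp (f + y), i < j) →
    ‖f + z‖ ≤ C * ‖f + y‖

end MBasis

namespace MBasis
variable {X : Type*} [NormedAddCommGroup X] [NormedSpace ℝ X] (B : MBasis X)

/-! ### auxiliary lemmas -/

lemma coord_sum (T : Finset ℕ) (c : ℕ → ℝ) (m : ℕ) :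
    B.coord m (∑ n ∈ T, c n • B.e n) = if m ∈ T then c m else 0 := by
  rw [map_sum]
  have h : ∀ n ∈ T, B.coord m (c n • B.e n) = if n = m then c n else 0 := by
    intro n hn
    rw [map_smul, B.biorth m n, smul_eq_mul]
    by_cases h : m = n <;> simp [h, eq_comm]
  rw [Finset.sum_congr rfl h, Finset.sum_ite_eq' T m c]

lemma coord_P (T : Finset ℕ) (f : X) (m : ℕ) :
    B.coord m (B.P T f) = if m ∈ T then B.coord m f else 0 :=
  B.coord_sum T _ m

lemma supp_sum_subset (T : Finset ℕ) (c : ℕ → ℝ) :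
    B.supp (∑ n ∈ T, c n • B.e n) ⊆ ↑T := by
  intro m hm
  simp only [supp, Set.mem_setOf_eq, B.coord_sum] at hm
  by_contra h
  rw [if_neg (fun hmT => h (Finset.mem_coe.mpr hmT))] at hm
  exact hm rfl

lemma finSupp_sum (T : Finset ℕ) (c : ℕ → ℝ) : B.FinSupp (∑ n ∈ T, c n • B.e n) :=
  Set.Finite.subset T.finite_toSet (B.supp_sum_subset T c)

lemma supp_smul_subset (a : ℝ) (f : X) : B.supp (a • f) ⊆ B.supp f := by
  intro m hm
  simp only [supp, Set.mem_setOf_eq, map_smul, smul_eq_mul] at hm ⊢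
  exact fun h => hm (by rw [h, mul_zero])

lemma supp_add_subset (f g : X) : B.supp (f + g) ⊆ B.supp f ∪ B.supp g := by
  intro m hm
  simp only [supp, Set.mem_setOf_eq, map_add, Set.mem_union] at hm ⊢
  by_contra h
  push_neg at h
  simp [h.1, h.2] at hm

lemma supp_sub_subset (f g : X) : B.supp (f - g) ⊆ B.supp f ∪ B.supp g := by
  intro m hm
  simp only [supp, Set.mem_setOf_eq, map_sub, Set.mem_union] at hm ⊢
  by_contra h
  push_neg at h
  simp [h.1, h.2] at hm

lemma finSupp_zero : B.FinSupp (0 : X) := by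
  have : B.supp (0 : X) = ∅ := by
    ext n; simp [supp]
  rw [FinSupp, this]; exact Set.finite_empty

lemma supp_zero : B.supp (0 : X) = ∅ := by ext n; simp [supp]

/-- a scaled version of Property (F*) -/
lemma propFStar_scaled {Fs : ℝ} (h : B.PropFStar Fs) (α : ℝ) (hα : 0 < α) (f z y : X)
    (hf : B.FinSupp f) (hz : B.FinSupp z) (hy : B.FinSupp y)
    (hfz : Disjoint (B.supp f) (B.supp z)) (hfy : Disjoint (B.supp f) (B.supp y))
    (hzy : Disjoint (B.supp z) (B.supp y))
    (hfb : ∀ n, |B.coord n f| ≤ α) (hzb : ∀ n, |B.coord n z| ≤ α)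
    (hcard : (B.supp z).ncard ≤ {n | B.coord n y ≠ 0 ∧ |B.coord n y| = α}.ncard)
    (hdom : ∀ m n, B.coord n y ≠ 0 → |B.coord m f| ≤ |B.coord n y|) :
    ‖f + z‖ ≤ Fs * ‖f + y‖ := by
  have hαne : α ≠ 0 := ne_of_gt hα
  have hsupp : ∀ w : X, B.supp (α⁻¹ • w) = B.supp w := by
    intro w
    ext n
    simp [supp, map_smul, smul_eq_mul, inv_eq_zero, hαne]
  have hcoord : ∀ (w : X) (n : ℕ), B.coord n (α⁻¹ • w) = α⁻¹ * B.coord n w := by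
    intro w n; rw [map_smul, smul_eq_mul]
  have hfin : ∀ w : X, B.FinSupp w → B.FinSupp (α⁻¹ • w) := by
    intro w hw; rw [FinSupp, hsupp]; exact hw
  have key := h (α⁻¹ • f) (α⁻¹ • z) (α⁻¹ • y) (hfin f hf) (hfin z hz) (hfin y hy)
    (by rw [hsupp, hsupp]; exact hfz) (by rw [hsupp, hsupp]; exact hfy)
    (by rw [hsupp, hsupp]; exact hzy)
    (by intro n; rw [hcoord, abs_mul, abs_inv, abs_of_pos hα]
        rw [inv_mul_le_iff₀ hα, mul_one]; exact hfb n)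
    (by intro n; rw [hcoord, abs_mul, abs_inv, abs_of_pos hα]
        rw [inv_mul_le_iff₀ hα, mul_one]; exact hzb n)
    (by rw [hsupp]
        have : B.unitSet (α⁻¹ • y) = {n | B.coord n y ≠ 0 ∧ |B.coord n y| = α} := by
          ext n
          simp only [unitSet, Set.mem_setOf_eq, hcoord, abs_mul, abs_inv, abs_of_pos hα,
            mul_ne_zero_iff, inv_eq_zero]
          constructor
          · rintro ⟨⟨-, h1⟩, h2⟩
            refine ⟨h1, ?_⟩
            field_simp at h2
            linarith
          · rintro ⟨h1, h2⟩
            refine ⟨⟨inv_ne_zero hαne, h1⟩, ?_⟩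
            rw [h2]
            field_simp
        rw [this]; exact hcard)
    (by intro m n hn
        rw [hcoord] at hn
        have hn' : B.coord n y ≠ 0 := by
          intro h0; rw [h0, mul_zero] at hn; exact hn rfl
        rw [hcoord, hcoord, abs_mul, abs_mul]
        exact mul_le_mul_of_nonneg_left (hdom m n hn') (abs_nonneg _))
  rw [← smul_add, ← smul_add, norm_smul, norm_smul, Real.norm_eq_abs, abs_inv,
    abs_of_pos hα] at key
  calc ‖f + z‖ = α * (α⁻¹ * ‖f + z‖) := by field_simp
  _ ≤ α * (Fs * (α⁻¹ * ‖f + y‖)) := by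
      apply mul_le_mul_of_nonneg_left key (le_of_lt hα)
  _ = Fs * ‖f + y‖ := by field_simp

lemma one_le_const {Fs : ℝ} (h : B.PropFStar Fs) : 1 ≤ Fs := by
  have he : B.e 0 ≠ 0 := by
    intro h0
    have := B.biorth 0 0
    rw [h0, map_zero] at this
    simp at this
  have hsupp : B.supp (B.e 0) ⊆ {0} := by
    intro n hn
    simp only [supp, Set.mem_setOf_eq, B.biorth] at hn
    by_contra h'
    simp only [Set.mem_singleton_iff] at h'
    simp [h'] at hn
  have key := h (B.e 0) 0 0 (Set.Finite.subset (Set.finite_singleton 0) hsupp)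
    B.finSupp_zero B.finSupp_zero
    (by rw [B.supp_zero]; exact Set.disjoint_empty _)
    (by rw [B.supp_zero]; exact Set.disjoint_empty _)
    (by rw [B.supp_zero]; exact Set.disjoint_empty _)
    (by intro n; rw [B.biorth]; by_cases h' : n = 0 <;> simp [h'])
    (by intro n; simp)
    (by simp [B.supp_zero])
    (by intro m n hn; simp at hn)
  rw [add_zero] at key
  have hpos : 0 < ‖B.e 0‖ := norm_pos_iff.mpr he
  nlinarith [key, hpos]

lemma key {Fs : ℝ} (hP : B.PropFStar Fs) :
    ∀ (N : ℕ) (D : Finset ℕ), D.card ≤ N → ∀ (u : X) (c : ℕ → ℝ) (α : ℝ), 0 < α →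
    B.FinSupp u → (∀ n ∈ D, B.coord n u = 0) → (∀ m, |B.coord m u| ≤ α) →
    (∀ n ∈ D, α ≤ |c n|) →
    ‖u + α • ∑ n ∈ D, msgn (c n) • B.e n‖ ≤ Fs * ‖u + ∑ n ∈ D, c n • B.e n‖ := by
  have hFs1 : 1 ≤ Fs := B.one_le_const hP
  intro N
  induction N with
  | zero =>
    intro D hD u c α hα hu hud hub hc
    have hDe : D = ∅ := Finset.card_eq_zero.mp (Nat.le_zero.mp hD)
    subst hDe
    simp only [Finset.sum_empty, smul_zero, add_zero]
    exact le_mul_of_one_le_left (norm_nonneg u) hFs1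
  | succ N ih =>
    intro D hD u c α hα hu hud hub hc
    by_cases hDe : D = ∅
    · subst hDe
      simp only [Finset.sum_empty, smul_zero, add_zero]
      exact le_mul_of_one_le_left (norm_nonneg u) hFs1
    set v : X := ∑ n ∈ D, c n • B.e n with hv
    -- Claim Hu
    have hdisj_uv : Disjoint (B.supp u) (B.supp v) := by
      rw [Set.disjoint_left]
      intro n hn hn'
      exact hn (hud n (Finset.mem_coe.mp (B.supp_sum_subset D c hn')))
    have hdom_v : ∀ m n, B.coord n v ≠ 0 → |B.coord m u| ≤ |B.coord n v| := by
      intro m n hn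
      rw [hv, B.coord_sum] at hn ⊢
      by_cases hnD : n ∈ D
      · rw [if_pos hnD]
        exact le_trans (hub m) (hc n hnD)
      · rw [if_neg hnD] at hn; exact absurd rfl hn
    have Hu : ‖u‖ ≤ Fs * ‖u + v‖ := by
      have := B.propFStar_scaled hP α hα u 0 v hu B.finSupp_zero (B.finSupp_sum D c)
        (by rw [B.supp_zero]; exact Set.disjoint_empty _) hdisj_uv
        (by rw [B.supp_zero]; exact Set.empty_disjoint _)
        hub (fun n => by simp [le_of_lt hα])
        (by rw [B.supp_zero]; simp)
        hdom_v
      simpa using this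
    -- the minimum β
    have hDne : D.Nonempty := Finset.nonempty_iff_ne_empty.mpr hDe
    have him : (D.image fun n => |c n|).Nonempty := hDne.image _
    set β := (D.image fun n => |c n|).min' him with hβ
    have hβle : ∀ n ∈ D, β ≤ |c n| := fun n hn =>
      Finset.min'_le _ _ (Finset.mem_image_of_mem _ hn)
    obtain ⟨n₀, hn₀D, hn₀⟩ : ∃ n ∈ D, |c n| = β := by
      have := Finset.min'_mem _ him
      rw [Finset.mem_image] at this
      obtain ⟨n, hn, he⟩ := this
      exact ⟨n, hn, he⟩
    have hαβ : α ≤ β := hn₀ ▸ hc n₀ hn₀D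
    have hβpos : 0 < β := lt_of_lt_of_le hα hαβ
    have hβne : β ≠ 0 := ne_of_gt hβpos
    -- Claim Hβ
    have Hβ : ‖u + β • ∑ n ∈ D, msgn (c n) • B.e n‖ ≤ Fs * ‖u + v‖ := by
      classical
      set D₁ := D.filter (fun n => |c n| ≤ β) with hD₁
      set D₂ := D.filter (fun n => ¬ |c n| ≤ β) with hD₂
      have hD₁val : ∀ n ∈ D₁, |c n| = β := by
        intro n hn
        rw [hD₁, Finset.mem_filter] at hn
        exact le_antisymm hn.2 (hβle n hn.1)
      have hsplit : ∀ g : ℕ → X, ∑ n ∈ D₁, g n + ∑ n ∈ D₂, g n = ∑ n ∈ D, g n :=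
        fun g => Finset.sum_filter_add_sum_filter_not D _ g
      have hD₁sum : β • ∑ n ∈ D₁, msgn (c n) • B.e n = ∑ n ∈ D₁, c n • B.e n := by
        rw [Finset.smul_sum]
        apply Finset.sum_congr rfl
        intro n hn
        rw [smul_smul]
        congr 1
        rw [mul_comm, ← hD₁val n hn]
        exact msgn_mul_abs (c n)
      by_cases hD₂e : D₂ = ∅
      · have hD₁D : D₁ = D := by
          rw [hD₁]
          apply Finset.filter_true_of_mem
          intro n hn
          by_contra hcon
          have : n ∈ D₂ := by rw [hD₂, Finset.mem_filter]; exact ⟨hn, hcon⟩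
          rw [hD₂e] at this; exact absurd this (Finset.notMem_empty n)
        have : u + β • ∑ n ∈ D, msgn (c n) • B.e n = u + v := by
          rw [← hD₁D, hD₁sum, hv, ← hD₁D]
        rw [this]
        exact le_mul_of_one_le_left (norm_nonneg _) hFs1
      · -- D₂ nonempty
        have hn₀D₁ : n₀ ∈ D₁ := by
          rw [hD₁, Finset.mem_filter]; exact ⟨hn₀D, le_of_eq hn₀⟩
        have hcard₂ : D₂.card ≤ N := by
          have h1 : D₁.card + D₂.card = D.card :=
            Finset.card_filter_add_card_filter_not _
          have h2 : 1 ≤ D₁.card := Finset.card_pos.mpr ⟨n₀, hn₀D₁⟩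
          omega
        set u' : X := u + ∑ n ∈ D₁, c n • B.e n with hu'
        have hcoord_u' : ∀ n, B.coord n u' =
            B.coord n u + (if n ∈ D₁ then c n else 0) := by
          intro n; rw [hu', map_add, B.coord_sum]
        have hfin_u' : B.FinSupp u' := by
          apply Set.Finite.subset (Set.Finite.union hu D₁.finite_toSet)
          exact B.supp_add_subset u _ |>.trans
            (Set.union_subset_union (le_refl _) (B.supp_sum_subset D₁ c))
        have hud' : ∀ n ∈ D₂, B.coord n u' = 0 := by
          intro n hn
          rw [hD₂, Finset.mem_filter] at hn
          have hnD₁ : n ∉ D₁ := by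
            rw [hD₁, Finset.mem_filter]
            intro hcon; exact hn.2 hcon.2
          rw [hcoord_u', if_neg hnD₁, hud n hn.1, add_zero]
        have hub' : ∀ m, |B.coord m u'| ≤ β := by
          intro m
          rw [hcoord_u']
          by_cases hm : m ∈ D₁
          · rw [if_pos hm, hud m (Finset.mem_filter.mp (hD₁ ▸ hm)).1, zero_add]
            exact le_of_eq (hD₁val m hm)
          · rw [if_neg hm, add_zero]
            exact le_trans (hub m) hαβ
        have hc' : ∀ n ∈ D₂, β ≤ |c n| := by
          intro n hn
          rw [hD₂, Finset.mem_filter] at hn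
          exact le_of_lt (not_le.mp hn.2)
        have hIH := ih D₂ hcard₂ u' c β hβpos hfin_u' hud' hub' hc'
        have heq1 : u + β • ∑ n ∈ D, msgn (c n) • B.e n =
            u' + β • ∑ n ∈ D₂, msgn (c n) • B.e n := by
          rw [hu', ← hsplit (fun n => msgn (c n) • B.e n), smul_add, hD₁sum]
          abel
        have heq2 : u' + ∑ n ∈ D₂, c n • B.e n = u + v := by
          rw [hu', hv, ← hsplit (fun n => c n • B.e n)]
          abel
        rw [heq1, ← heq2]
        exact hIH
    -- final convex combination
    set w : X := ∑ n ∈ D, msgn (c n) • B.e n with hw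
    set t : ℝ := α / β with ht
    have ht0 : 0 ≤ t := div_nonneg (le_of_lt hα) (le_of_lt hβpos)
    have ht1 : t ≤ 1 := (div_le_one hβpos).mpr hαβ
    have hid : u + α • w = t • (u + β • w) + (1 - t) • u := by
      rw [smul_add, smul_smul, ht, div_mul_cancel₀ α hβne, sub_smul, one_smul]
      abel
    have hnorm : ‖u + α • w‖ ≤ t * ‖u + β • w‖ + (1 - t) * ‖u‖ := by
      rw [hid]
      refine le_trans (norm_add_le _ _) ?_
      rw [norm_smul, norm_smul, Real.norm_eq_abs, Real.norm_eq_abs,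
        abs_of_nonneg ht0, abs_of_nonneg (by linarith)]
    have h1 := mul_le_mul_of_nonneg_left Hβ ht0
    have h2 := mul_le_mul_of_nonneg_left Hu (by linarith : (0:ℝ) ≤ 1 - t)
    calc ‖u + α • w‖ ≤ t * ‖u + β • w‖ + (1 - t) * ‖u‖ := hnorm
    _ ≤ t * (Fs * ‖u + v‖) + (1 - t) * (Fs * ‖u + v‖) := add_le_add h1 h2
    _ = Fs * ‖u + v‖ := by ring

lemma P_sub (T : Finset ℕ) (f g : X) : B.P T (f - g) = B.P T f - B.P T g := by
  unfold P
  rw [← Finset.sum_sub_distrib]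
  apply Finset.sum_congr rfl
  intro n hn
  rw [map_sub, sub_smul]

lemma norm_P_le (T : Finset ℕ) (w : X) :
    ‖B.P T w‖ ≤ (∑ n ∈ T, ‖B.coord n‖ * ‖B.e n‖) * ‖w‖ := by
  unfold P
  refine le_trans (norm_sum_le _ _) ?_
  rw [Finset.sum_mul]
  apply Finset.sum_le_sum
  intro n hn
  rw [norm_smul, Real.norm_eq_abs]
  have hb : |B.coord n w| ≤ ‖B.coord n‖ * ‖w‖ := by
    have := (B.coord n).le_opNorm w
    rwa [Real.norm_eq_abs] at this
  calc |B.coord n w| * ‖B.e n‖ ≤ (‖B.coord n‖ * ‖w‖) * ‖B.e n‖ :=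
    mul_le_mul_of_nonneg_right hb (norm_nonneg _)
  _ = ‖B.coord n‖ * ‖B.e n‖ * ‖w‖ := by ring

lemma finSupp_span (g : X) (hg : g ∈ Submodule.span ℝ (Set.range B.e)) : B.FinSupp g := by
  induction hg using Submodule.span_induction with
  | mem x hx =>
    obtain ⟨m, rfl⟩ := hx
    apply Set.Finite.subset (Set.finite_singleton m)
    intro n hn
    simp only [supp, Set.mem_setOf_eq, B.biorth] at hn
    by_contra hne
    rw [Set.mem_singleton_iff] at hne
    rw [if_neg hne] at hn
    exact hn rfl
  | zero => exact B.finSupp_zero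
  | add x y _ _ hx hy => exact Set.Finite.subset (hx.union hy) (B.supp_add_subset x y)
  | smul a x _ hx => exact Set.Finite.subset hx (B.supp_smul_subset a x)

lemma finite_AG {Fs : ℝ} (hP : B.PropFStar Fs) (x : X) (hx : B.FinSupp x)
    (A B' : Finset ℕ) (hG : B.Greedy x A) (hcard : B'.card ≤ A.card) :
    ‖x - B.P A x‖ ≤ Fs ^ 2 * ‖x - B.P B' x‖ := by
  have hFs1 : 1 ≤ Fs := B.one_le_const hP
  have hFs2 : 1 ≤ Fs ^ 2 := by nlinarith
  classical
  set D := A \ B' with hD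
  set E := B' \ A with hE
  set u : X := x - B.P (A ∪ B') x with hu
  have hPA : B.P (A ∪ B') x = B.P A x + B.P E x := by
    unfold P
    rw [hE, ← Finset.sum_union Finset.disjoint_sdiff, Finset.union_sdiff_self_eq_union]
  have hPB : B.P (A ∪ B') x = B.P B' x + B.P D x := by
    unfold P
    rw [hD, ← Finset.sum_union Finset.disjoint_sdiff, Finset.union_sdiff_self_eq_union,
      Finset.union_comm]
  have heq1 : x - B.P A x = u + B.P E x := by rw [hu, hPA]; abel
  have heq2 : x - B.P B' x = u + B.P D x := by rw [hu, hPB]; abel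
  have hcu : ∀ m, B.coord m u = if m ∈ A ∪ B' then 0 else B.coord m x := by
    intro m
    rw [hu, map_sub, B.coord_P]
    split
    · rw [sub_self]
    · rw [sub_zero]
  have hufin : B.FinSupp u := by
    apply Set.Finite.subset hx
    intro n hn
    simp only [supp, Set.mem_setOf_eq] at hn ⊢
    rw [hcu] at hn
    intro h0
    apply hn
    split <;> simp [h0]
  by_cases hDe : D = ∅
  · have hAB : A = B' := by
      apply Finset.eq_of_subset_of_card_le _ hcard
      rw [← Finset.sdiff_eq_empty_iff_subset]
      exact hDe
    rw [hAB]
    exact le_mul_of_one_le_left (norm_nonneg _) hFs2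
  · have hDne : D.Nonempty := Finset.nonempty_iff_ne_empty.mpr hDe
    have him : (D.image fun n => |B.coord n x|).Nonempty := hDne.image _
    set α := (D.image fun n => |B.coord n x|).min' him with hα
    have hαle : ∀ n ∈ D, α ≤ |B.coord n x| := fun n hn =>
      Finset.min'_le _ _ (Finset.mem_image_of_mem _ hn)
    obtain ⟨n₀, hn₀D, hn₀⟩ : ∃ n ∈ D, |B.coord n x| = α := by
      have := Finset.min'_mem _ him
      rw [Finset.mem_image] at this
      obtain ⟨n, hn, he⟩ := this
      exact ⟨n, hn, he⟩
    have hn₀A : n₀ ∈ A := (Finset.mem_sdiff.mp hn₀D).1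
    have hoff : ∀ m, m ∉ A → |B.coord m x| ≤ α := by
      intro m hm
      rw [← hn₀]
      exact hG n₀ hn₀A m hm
    by_cases hα0 : α ≤ 0
    · -- all coords off A vanish; x = P A x
      have hzero : ∀ m, m ∉ A → B.coord m x = 0 := by
        intro m hm
        have := hoff m hm
        have h2 := abs_nonneg (B.coord m x)
        rw [abs_eq_zero.symm] at *
        · linarith [abs_nonneg (B.coord m x)]
      have hxa : x - B.P A x = 0 := by
        apply B.total
        intro m
        rw [map_sub, B.coord_P]
        split
        · rw [sub_self]
        · rw [sub_zero]; exact hzero m (by assumption)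
      rw [hxa, norm_zero]
      positivity
    · push_neg at hα0
      -- cardinality
      have hED : E.card ≤ D.card := by
        have h1 : (B' \ A).card + (B' ∩ A).card = B'.card := Finset.card_sdiff_add_card_inter B' A
        have h2 : (A \ B').card + (A ∩ B').card = A.card := Finset.card_sdiff_add_card_inter A B'
        have h3 : (B' ∩ A).card = (A ∩ B').card := by rw [Finset.inter_comm]
        rw [hE, hD]
        omega
      set w : X := ∑ n ∈ D, msgn (B.coord n x) • B.e n with hw
      have hwcoord : ∀ n, B.coord n (α • w) = α * (if n ∈ D then msgn (B.coord n x) else 0) := by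
        intro n
        rw [map_smul, smul_eq_mul, hw, B.coord_sum]
      -- supports
      have hsuppz : B.supp (B.P E x) ⊆ ↑E := B.supp_sum_subset E _
      have hsuppy : B.supp (α • w) ⊆ ↑D := by
        intro n hn
        simp only [supp, Set.mem_setOf_eq, hwcoord] at hn
        by_contra hc
        rw [if_neg (fun hh => hc (Finset.mem_coe.mpr hh)), mul_zero] at hn
        exact hn rfl
      have hsuppu : ∀ n, n ∈ B.supp u → n ∉ A ∪ B' := by
        intro n hn
        simp only [supp, Set.mem_setOf_eq, hcu] at hn
        intro hc
        rw [if_pos hc] at hn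
        exact hn rfl
      have hdisj1 : Disjoint (B.supp u) (B.supp (B.P E x)) := by
        rw [Set.disjoint_left]
        intro n hn hn'
        exact hsuppu n hn (Finset.mem_union_right A (Finset.mem_sdiff.mp
          (Finset.mem_coe.mp (hsuppz hn'))).1)
      have hdisj2 : Disjoint (B.supp u) (B.supp (α • w)) := by
        rw [Set.disjoint_left]
        intro n hn hn'
        exact hsuppu n hn (Finset.mem_union_left B' (Finset.mem_sdiff.mp
          (Finset.mem_coe.mp (hsuppy hn'))).1)
      have hdisj3 : Disjoint (B.supp (B.P E x)) (B.supp (α • w)) := by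
        rw [Set.disjoint_left]
        intro n hn hn'
        have h1 := Finset.mem_sdiff.mp (Finset.mem_coe.mp (hsuppz hn))
        have h2 := Finset.mem_sdiff.mp (Finset.mem_coe.mp (hsuppy hn'))
        exact h1.2 h2.1
      -- coordinate bounds
      have hub : ∀ m, |B.coord m u| ≤ α := by
        intro m
        rw [hcu]
        split
        · simpa using le_of_lt hα0
        · rename_i hm
          exact hoff m (fun hc => hm (Finset.mem_union_left B' hc))
      have hzb : ∀ m, |B.coord m (B.P E x)| ≤ α := by
        intro m
        rw [B.coord_P]
        split
        · rename_i hm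
          exact hoff m (Finset.mem_sdiff.mp hm).2
        · simpa using le_of_lt hα0
      -- the unit set
      have hunit : {n | B.coord n (α • w) ≠ 0 ∧ |B.coord n (α • w)| = α} = ↑D := by
        ext n
        simp only [Set.mem_setOf_eq, hwcoord, Finset.mem_coe]
        constructor
        · rintro ⟨h1, -⟩
          by_contra hc
          rw [if_neg hc, mul_zero] at h1
          exact h1 rfl
        · intro hn
          rw [if_pos hn]
          constructor
          · apply mul_ne_zero (ne_of_gt hα0)
            intro h0
            have := abs_msgn (B.coord n x)
            rw [h0] at this
            simp at this
          · rw [abs_mul, abs_msgn, mul_one, abs_of_pos hα0]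
      have hncard : (B.supp (B.P E x)).ncard ≤
          {n | B.coord n (α • w) ≠ 0 ∧ |B.coord n (α • w)| = α}.ncard := by
        rw [hunit]
        calc (B.supp (B.P E x)).ncard ≤ (↑E : Set ℕ).ncard :=
          Set.ncard_le_ncard hsuppz E.finite_toSet
        _ = E.card := Set.ncard_coe_finset E
        _ ≤ D.card := hED
        _ = (↑D : Set ℕ).ncard := (Set.ncard_coe_finset D).symm
      have hdom : ∀ m n, B.coord n (α • w) ≠ 0 → |B.coord m u| ≤ |B.coord n (α • w)| := by
        intro m n hn
        rw [hwcoord] at hn ⊢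
        by_cases hnD : n ∈ D
        · rw [if_pos hnD, abs_mul, abs_msgn, mul_one, abs_of_pos hα0]
          exact hub m
        · rw [if_neg hnD, mul_zero] at hn
          exact absurd rfl hn
      have step1 : ‖u + B.P E x‖ ≤ Fs * ‖u + α • w‖ :=
        B.propFStar_scaled hP α hα0 u (B.P E x) (α • w) hufin
          (B.finSupp_sum E _)
          (Set.Finite.subset (Set.Finite.subset D.finite_toSet (B.supp_sum_subset D _))
            (B.supp_smul_subset α w))
          hdisj1 hdisj2 hdisj3 hub hzb hncard hdom
      have hud : ∀ n ∈ D, B.coord n u = 0 := by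
        intro n hn
        rw [hcu, if_pos (Finset.mem_union_left B' (Finset.mem_sdiff.mp hn).1)]
      have step2 : ‖u + α • w‖ ≤ Fs * ‖u + ∑ n ∈ D, B.coord n x • B.e n‖ :=
        B.key hP D.card D le_rfl u (fun n => B.coord n x) α hα0 hufin hud hub hαle
      have hPD : B.P D x = ∑ n ∈ D, B.coord n x • B.e n := rfl
      calc ‖x - B.P A x‖ = ‖u + B.P E x‖ := by rw [heq1]
      _ ≤ Fs * ‖u + α • w‖ := step1
      _ ≤ Fs * (Fs * ‖u + ∑ n ∈ D, B.coord n x • B.e n‖) :=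
          mul_le_mul_of_nonneg_left step2 (by linarith)
      _ = Fs ^ 2 * ‖x - B.P B' x‖ := by rw [heq2, hPD]; ring

end MBasis

/-- If the basis has Property (F*) with constant `𝓕*`, then it is almost-greedy
with constant `C_al ≤ (𝓕*)²`. -/
theorem propFStar_implies_almostGreedy
    {X : Type*} [NormedAddCommGroup X] [NormedSpace ℝ X] [CompleteSpace X]
    (B : MBasis X) (Fs : ℝ) (h : B.PropFStar Fs) :
    B.AlmostGreedy (Fs ^ 2) := by
  intro f A hG B' hcard
  have hFs1 : 1 ≤ Fs := B.one_le_const h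
  have hFs2 : 1 ≤ Fs ^ 2 := by nlinarith
  obtain ⟨c₁, c₂, hc₁, hsemi⟩ := B.semiNormalized
  have hc₂ : 0 < c₂ := lt_of_lt_of_le hc₁ (le_trans (hsemi 0).2.1 (hsemi 0).2.2.2)
  classical
  apply le_of_forall_pos_le_add
  intro ε hε
  set S' := A ∪ B' with hS
  set CP : Finset ℕ → ℝ := fun T => ∑ n ∈ T, ‖B.coord n‖ * ‖B.e n‖ with hCP
  have hCP0 : ∀ T, 0 ≤ CP T := fun T =>
    Finset.sum_nonneg (fun n _ => mul_nonneg (norm_nonneg _) (norm_nonneg _))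
  set K₂ : ℝ := ∑ n ∈ A, ‖B.e n‖ with hK₂
  have hK₂0 : 0 ≤ K₂ := Finset.sum_nonneg fun n _ => norm_nonneg _
  set K : ℝ := 1 + CP S' + c₂ * K₂ with hK
  have hK1 : 1 ≤ K := by
    have := hCP0 S'
    nlinarith
  set M : ℝ := Fs ^ 2 * ((1 + CP B') * K) + (1 + CP A) * K with hM
  have hM1 : 0 < M := by
    have t1 : 0 ≤ Fs ^ 2 * ((1 + CP B') * K) :=
      mul_nonneg (by nlinarith) (mul_nonneg (by linarith [hCP0 B']) (by linarith))
    have t2 : (0:ℝ) < (1 + CP A) * K :=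
      mul_pos (by linarith [hCP0 A]) (by linarith)
    rw [hM]; linarith
  set ε' : ℝ := ε / M with hε'def
  have hε'pos : 0 < ε' := div_pos hε hM1
  have hdense : Dense (↑(Submodule.span ℝ (Set.range B.e)) : Set X) := by
    have hd := B.dense_span
    rwa [← Submodule.dense_iff_topologicalClosure_eq_top] at hd
  obtain ⟨g, hg_mem, hg_close⟩ : ∃ g ∈ Submodule.span ℝ (Set.range B.e), ‖f - g‖ < ε' := by
    obtain ⟨g, hg1, hg2⟩ := Metric.mem_closure_iff.mp (hdense f) ε' hε'pos
    exact ⟨g, hg1, by rwa [dist_eq_norm] at hg2⟩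
  have hgfin := B.finSupp_span g hg_mem
  have hcoord_fg : ∀ m, |B.coord m (f - g)| ≤ c₂ * ε' := by
    intro m
    have h1 : |B.coord m (f - g)| ≤ ‖B.coord m‖ * ‖f - g‖ := by
      have := (B.coord m).le_opNorm (f - g)
      rwa [Real.norm_eq_abs] at this
    calc |B.coord m (f - g)| ≤ ‖B.coord m‖ * ‖f - g‖ := h1
    _ ≤ c₂ * ε' := mul_le_mul (hsemi m).2.2.2 (le_of_lt hg_close) (norm_nonneg _)
        (le_of_lt hc₂)
  set δ : ℝ := c₂ * ε' with hδ
  have hδ0 : 0 ≤ δ := le_of_lt (mul_pos hc₂ hε'pos)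
  set x' : X := g + B.P S' (f - g) + δ • ∑ n ∈ A, msgn (B.coord n f) • B.e n with hx'
  have hcx' : ∀ m, B.coord m x' = (if m ∈ S' then B.coord m f else B.coord m g)
      + (if m ∈ A then δ * msgn (B.coord m f) else 0) := by
    intro m
    have hstep : B.coord m x' = B.coord m g
        + (if m ∈ S' then B.coord m f - B.coord m g else 0)
        + δ * (if m ∈ A then msgn (B.coord m f) else 0) := by
      rw [hx', map_add, map_add, map_smul, B.coord_P, B.coord_sum, map_sub, smul_eq_mul]
    rw [hstep]
    by_cases hmA : m ∈ A
    · rw [if_pos hmA, if_pos (Finset.mem_union_left _ hmA), if_pos hmA,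
        if_pos (Finset.mem_union_left _ hmA)]
      ring
    · rw [if_neg hmA, if_neg hmA, mul_zero, add_zero, add_zero]
      by_cases hmS : m ∈ S'
      · rw [if_pos hmS, if_pos hmS]; ring
      · rw [if_neg hmS, if_neg hmS, add_zero]
  have hx'fin : B.FinSupp x' := by
    apply Set.Finite.subset ((hgfin.union S'.finite_toSet).union A.finite_toSet)
    intro n hn
    by_contra hcon
    simp only [Set.mem_union, Finset.mem_coe, not_or] at hcon
    obtain ⟨⟨hg', hS''⟩, hA'⟩ := hcon
    simp only [MBasis.supp, Set.mem_setOf_eq, not_not] at hg'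
    simp only [MBasis.supp, Set.mem_setOf_eq] at hn
    rw [hcx' n, if_neg hS'', if_neg hA', add_zero] at hn
    exact hn hg'
  have hG' : B.Greedy x' A := by
    intro n hn m hm
    have hnabs : |B.coord n x'| = |B.coord n f| + δ := by
      rw [hcx' n, if_pos (Finset.mem_union_left _ hn), if_pos hn]
      exact abs_add_msgn _ δ hδ0
    rw [hnabs, hcx' m, if_neg hm, add_zero]
    by_cases hmS : m ∈ S'
    · rw [if_pos hmS]
      exact le_trans (hG n hn m hm) (by linarith)
    · rw [if_neg hmS]
      have h2 : |B.coord m g| ≤ |B.coord m f| + δ := by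
        have h3 := hcoord_fg m
        have h4 : |B.coord m g| - |B.coord m f| ≤ |B.coord m g - B.coord m f| :=
          abs_sub_abs_le_abs_sub _ _
        rw [abs_sub_comm] at h4
        rw [map_sub] at h3
        linarith
      exact le_trans h2 (add_le_add_left (hG n hn m hm) δ)
  have hAG := B.finite_AG h x' hx'fin A B' hG' hcard
  have hsum_norm : ‖∑ n ∈ A, msgn (B.coord n f) • B.e n‖ ≤ K₂ := by
    refine le_trans (norm_sum_le _ _) ?_
    rw [hK₂]
    apply Finset.sum_le_sum
    intro n _
    rw [norm_smul, Real.norm_eq_abs, abs_msgn, one_mul]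
  have hdiffnorm : ‖f - x'‖ ≤ ε' * K := by
    have hfx' : f - x' = ((f - g) - B.P S' (f - g))
        - δ • ∑ n ∈ A, msgn (B.coord n f) • B.e n := by
      rw [hx']; abel
    rw [hfx']
    refine le_trans (norm_sub_le _ _) ?_
    have t1 : ‖(f - g) - B.P S' (f - g)‖ ≤ ‖f - g‖ + CP S' * ‖f - g‖ :=
      le_trans (norm_sub_le _ _) (add_le_add_right (B.norm_P_le S' (f - g)) _)
    have t2 : ‖δ • ∑ n ∈ A, msgn (B.coord n f) • B.e n‖ ≤ δ * K₂ := by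
      rw [norm_smul, Real.norm_eq_abs, abs_of_nonneg hδ0]
      exact mul_le_mul_of_nonneg_left hsum_norm hδ0
    have hfg : ‖f - g‖ ≤ ε' := le_of_lt hg_close
    have hCPS := hCP0 S'
    calc ‖(f - g) - B.P S' (f - g)‖ + ‖δ • ∑ n ∈ A, msgn (B.coord n f) • B.e n‖
        ≤ (‖f - g‖ + CP S' * ‖f - g‖) + δ * K₂ := add_le_add t1 t2
    _ ≤ (ε' + CP S' * ε') + (c₂ * ε') * K₂ := by
        refine add_le_add (add_le_add hfg ?_) le_rfl
        exact mul_le_mul_of_nonneg_left hfg hCPS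
    _ = ε' * K := by rw [hK]; ring
  have tri : ∀ v w : X, ‖v‖ ≤ ‖w‖ + ‖v - w‖ := by
    intro v w
    have hvw : v = w + (v - w) := by abel
    calc ‖v‖ = ‖w + (v - w)‖ := by rw [← hvw]
    _ ≤ ‖w‖ + ‖v - w‖ := norm_add_le _ _
  have hproj : ∀ T : Finset ℕ, ‖(f - B.P T f) - (x' - B.P T x')‖ ≤ (1 + CP T) * ‖f - x'‖ := by
    intro T
    have hre : (f - B.P T f) - (x' - B.P T x') = (f - x') - B.P T (f - x') := by
      rw [B.P_sub]; abel
    rw [hre]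
    refine le_trans (norm_sub_le _ _) ?_
    have := B.norm_P_le T (f - x')
    linarith
  have e1 : ‖f - B.P A f‖ ≤ ‖x' - B.P A x'‖ + (1 + CP A) * ‖f - x'‖ :=
    le_trans (tri _ _) (add_le_add_right (hproj A) _)
  have e2 : ‖x' - B.P B' x'‖ ≤ ‖f - B.P B' f‖ + (1 + CP B') * ‖f - x'‖ := by
    refine le_trans (tri _ _) (add_le_add_right ?_ _)
    have hre : (x' - B.P B' x') - (f - B.P B' f) = -((f - B.P B' f) - (x' - B.P B' x')) := by
      abel
    rw [hre, norm_neg]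
    exact hproj B'
  have hεM : ε' * M = ε := by
    rw [hε'def]
    field_simp
  have h1A : (0:ℝ) ≤ 1 + CP A := by linarith [hCP0 A]
  have h1B : (0:ℝ) ≤ 1 + CP B' := by linarith [hCP0 B']
  have hFs2nn : (0:ℝ) ≤ Fs ^ 2 := by linarith
  calc ‖f - B.P A f‖ ≤ ‖x' - B.P A x'‖ + (1 + CP A) * ‖f - x'‖ := e1
  _ ≤ Fs ^ 2 * ‖x' - B.P B' x'‖ + (1 + CP A) * (ε' * K) :=
      add_le_add hAG (mul_le_mul_of_nonneg_left hdiffnorm h1A)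
  _ ≤ Fs ^ 2 * (‖f - B.P B' f‖ + (1 + CP B') * (ε' * K)) + (1 + CP A) * (ε' * K) := by
      refine add_le_add_left (mul_le_mul_of_nonneg_left ?_ hFs2nn) _
      exact le_trans e2 (add_le_add_right (mul_le_mul_of_nonneg_left hdiffnorm h1B) _)
  _ = Fs ^ 2 * ‖f - B.P B' f‖ + ε' * M := by rw [hM]; ring
  _ = Fs ^ 2 * ‖f - B.P B' f‖ + ε := by rw [hεM]
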